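/- Let x = Σ_{i≥1}[i]·x_i ∈ Γ_s (s ≥ 2) lie in ker Sq^1 ∩ ker Sq^2. Then the element x' = Σ_{j≥2}[2j]·x_{2j−3} satisfies x'Sq^3 = Σ_{i≥2}[i]·x_i, i.e., x − [1]·x_1 lies in the image of Sq^3. -/

import Mathlib

/-!
Write `x = Σ [i]·x_i`. Sorting `x Sq^1` and `x Sq^2` by their first letter with the Cartan
formula turns the kernel conditions into the relations `x_i Sq^1 = i·x_{i+1}` and
`x_i Sq^2 = i·x_{i+1} Sq^1 + C(i,2)·x_{i+2}`. With the Adem relations `Sq^1 Sq^1 = 0` and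
`Sq^2 Sq^1 = Sq^3` these determine `x_{2j+1} Sq^k` for `k ≤ 3`, and the Cartan formula gives
`([2j+4]·x_{2j+1}) Sq^3 = t_{j+1} - t_j + [2j+2]·x_{2j+2} + [2j+3]·x_{2j+3}` with
`t_j = j·([2j+1]·x_{2j+1} + [2j+2]·x_{2j+2})`. Summing over `j` telescopes to `Σ_{i≥2} [i]·x_i`,
which is `x + [1]·x_1` because `x_0 = 0` and we are in characteristic 2.
-/
noncomputable section

/-- `Γ`: the free associative F₂-algebra on non-commuting generators `[a]`,
modelled as the monoid algebra of the free monoid on ℕ (only letters `a ≥ 1`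
are used; the Steenrod action never produces the letter `0` from them). -/
abbrev Gam : Type := MonoidAlgebra (ZMod 2) (FreeMonoid ℕ)

/-- The generator `[a]` of `Γ`. -/
def gen (a : ℕ) : Gam := MonoidAlgebra.single (FreeMonoid.ofList [a]) 1

/-- The right Steenrod action on a word, defined on generators by
`[a]Sq^i = C(a−i, i)·[a−i]` (mod 2) and extended by the Cartan formula. -/
def sqWord : List ℕ → ℕ → Gam
  | [], n => if n = 0 then 1 else 0
  | a :: w, n =>
      ∑ p ∈ Finset.range (n + 1),
        (Nat.choose (a - p) p : ZMod 2) • (gen (a - p) * sqWord w (n - p))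

/-- The right Steenrod action on `Γ`: `SqG n x = x·Sq^n`. -/
def SqG (n : ℕ) (x : Gam) : Gam :=
  Finsupp.sum x.coeff fun w c => c • sqWord (FreeMonoid.toList w) n

/-- `x` is homogeneous of length `s` (i.e. `x ∈ Γ_s`). -/
def homLen (s : ℕ) (x : Gam) : Prop :=
  ∀ w ∈ x.coeff.support, (FreeMonoid.toList w).length = s

open Finset

instance : CharP Gam 2 := charP_of_injective_algebraMap' (ZMod 2) 2

def sqLin (n : ℕ) : Gam →ₗ[ZMod 2] Gam :=
  (Finsupp.linearCombination (ZMod 2) fun w : FreeMonoid ℕ => sqWord (FreeMonoid.toList w) n).comp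
    (MonoidAlgebra.coeffLinearEquiv (ZMod 2)).toLinearMap

lemma SqG_map_zero (n : ℕ) : SqG n 0 = 0 := (sqLin n).map_zero

lemma SqG_map_add (n : ℕ) (x y : Gam) : SqG n (x + y) = SqG n x + SqG n y :=
  (sqLin n).map_add x y

lemma SqG_map_smul (n : ℕ) (c : ZMod 2) (x : Gam) : SqG n (c • x) = c • SqG n x :=
  (sqLin n).map_smul c x

lemma SqG_map_sum {ι : Type*} (n : ℕ) (s : Finset ι) (f : ι → Gam) :
    SqG n (∑ i ∈ s, f i) = ∑ i ∈ s, SqG n (f i) :=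
  map_sum (sqLin n) f s

lemma gen_mul_single (a : ℕ) (w : FreeMonoid ℕ) (c : ZMod 2) :
    gen a * MonoidAlgebra.single w c = MonoidAlgebra.single (FreeMonoid.of a * w) c := by
  rw [gen, MonoidAlgebra.single_mul_single, one_mul]
  rfl

@[elab_as_elim]
lemma Gam.induction_on_gen {motive : Gam → Prop} (z : Gam) (one : motive 1)
    (gen_mul : ∀ a z, motive z → motive (gen a * z))
    (add : ∀ f g, motive f → motive g → motive (f + g))
    (smul : ∀ (c : ZMod 2) z, motive z → motive (c • z)) : motive z := by
  induction z using MonoidAlgebra.induction_linear with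
  | zero => simpa using smul 0 1 one
  | add f g hf hg => exact add f g hf hg
  | single w c =>
    rw [← mul_one c, ← smul_eq_mul, ← MonoidAlgebra.smul_single]
    refine smul c _ ?_
    induction w using FreeMonoid.inductionOn' with
    | one => exact one
    | of_mul a w ih => rw [← gen_mul_single]; exact gen_mul a _ ih

lemma SqG_single (n : ℕ) (w : FreeMonoid ℕ) (c : ZMod 2) :
    SqG n (MonoidAlgebra.single w c) = c • sqWord (FreeMonoid.toList w) n :=
  Finsupp.sum_single_index (zero_smul _ _)

lemma SqG_gen_mul (n a : ℕ) (z : Gam) :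
    SqG n (gen a * z) =
      ∑ p ∈ range (n + 1), ((a - p).choose p : ZMod 2) • (gen (a - p) * SqG (n - p) z) := by
  induction z using MonoidAlgebra.induction_linear with
  | zero => simp [SqG_map_zero]
  | add f g hf hg => simp only [mul_add, SqG_map_add, hf, hg, smul_add, sum_add_distrib]
  | single w c =>
    rw [gen_mul_single, SqG_single, FreeMonoid.toList_of_mul, sqWord, smul_sum]
    refine sum_congr rfl fun p _ => ?_
    rw [SqG_single, mul_smul_comm, smul_comm]

lemma SqG_zero_apply (x : Gam) : SqG 0 x = x := by
  induction x using Gam.induction_on_gen with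
  | one => simp [MonoidAlgebra.one_def, SqG_single, sqWord]
  | gen_mul a z ih => simp [SqG_gen_mul, ih]
  | add f g hf hg => rw [SqG_map_add, hf, hg]
  | smul c z ih => rw [SqG_map_smul, ih]

lemma SqG_succ_one (n : ℕ) : SqG (n + 1) 1 = 0 := by
  simp [MonoidAlgebra.one_def, SqG_single, sqWord]

lemma SqG_one_gen_mul (a : ℕ) (z : Gam) :
    SqG 1 (gen a * z) = gen a * SqG 1 z + ((a - 1 : ℕ) : ZMod 2) • (gen (a - 1) * z) := by
  simp [SqG_gen_mul, sum_range_succ, SqG_zero_apply]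

lemma SqG_two_gen_mul (a : ℕ) (z : Gam) :
    SqG 2 (gen a * z) = gen a * SqG 2 z + ((a - 1 : ℕ) : ZMod 2) • (gen (a - 1) * SqG 1 z)
      + ((a - 2).choose 2 : ZMod 2) • (gen (a - 2) * z) := by
  simp [SqG_gen_mul, sum_range_succ, SqG_zero_apply]

lemma SqG_three_gen_mul (a : ℕ) (z : Gam) :
    SqG 3 (gen a * z) = gen a * SqG 3 z + ((a - 1 : ℕ) : ZMod 2) • (gen (a - 1) * SqG 2 z)
      + ((a - 2).choose 2 : ZMod 2) • (gen (a - 2) * SqG 1 z)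
      + ((a - 3).choose 3 : ZMod 2) • (gen (a - 3) * z) := by
  simp [SqG_gen_mul, sum_range_succ, SqG_zero_apply]

lemma choose_cast_zmod_two (n k : ℕ) :
    (n.choose k : ZMod 2) = (((n % 2).choose (k % 2) * (n / 2).choose (k / 2) : ℕ) : ZMod 2) :=
  haveI := Fact.mk Nat.prime_two
  (ZMod.natCast_eq_natCast_iff _ _ _).2 Choose.choose_modEq_choose_mod_mul_choose_div_nat

lemma natCast_mul_natCast_sub_one (m : ℕ) : (m : ZMod 2) * ((m - 1 : ℕ) : ZMod 2) = 0 := by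
  rw [← Nat.cast_mul, ZMod.natCast_eq_zero_iff_even]
  exact Nat.even_mul_pred_self m

lemma natCast_mul_choose_sub_two (m : ℕ) :
    (m : ZMod 2) * ((m - 2).choose 2 : ZMod 2) = ((m - 2).choose 3 : ZMod 2) := by
  rcases Nat.lt_or_ge m 2 with hm | hm
  · interval_cases m <;> rfl
  · obtain ⟨k, rfl⟩ := Nat.exists_eq_add_of_le' hm
    rw [Nat.add_sub_cancel, choose_cast_zmod_two k 2, choose_cast_zmod_two k 3,
      CharTwo.natCast_eq_mod (k + 2)]
    rcases Nat.mod_two_eq_zero_or_one k with h | h <;> simp [h]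

lemma SqG_one_SqG_one (z : Gam) : SqG 1 (SqG 1 z) = 0 := by
  induction z using Gam.induction_on_gen with
  | one => rw [SqG_succ_one, SqG_map_zero]
  | gen_mul a z ih =>
    rw [SqG_one_gen_mul, SqG_map_add, SqG_map_smul, SqG_one_gen_mul, SqG_one_gen_mul, ih,
      smul_add, smul_smul, natCast_mul_natCast_sub_one, zero_smul, mul_zero, zero_add, add_zero,
      CharTwo.add_self_eq_zero]
  | add f g hf hg => rw [SqG_map_add, SqG_map_add, hf, hg, add_zero]
  | smul c z ih => rw [SqG_map_smul, SqG_map_smul, ih, smul_zero]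

lemma SqG_two_SqG_one (z : Gam) : SqG 2 (SqG 1 z) = SqG 3 z := by
  induction z using Gam.induction_on_gen with
  | one => rw [SqG_succ_one, SqG_map_zero, SqG_succ_one]
  | gen_mul a z ih =>
    rw [SqG_one_gen_mul, SqG_map_add, SqG_map_smul, SqG_two_gen_mul, SqG_two_gen_mul, ih,
      SqG_one_SqG_one, SqG_three_gen_mul, smul_add, smul_add, smul_smul, smul_smul,
      natCast_mul_natCast_sub_one, natCast_mul_choose_sub_two]
    simp only [Nat.sub_sub, Nat.reduceAdd, mul_zero, smul_zero, zero_smul, add_zero]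
    abel
  | add f g hf hg => rw [SqG_map_add, SqG_map_add, SqG_map_add, hf, hg]
  | smul c z ih => rw [SqG_map_smul, SqG_map_smul, SqG_map_smul, ih]

lemma coeff_gen_mul_of_mul (i j : ℕ) (z : Gam) (w : FreeMonoid ℕ) :
    (gen j * z).coeff (FreeMonoid.of i * w) = if j = i then z.coeff w else 0 := by
  split_ifs with h
  · subst h
    exact (MonoidAlgebra.coeff_single_mul_eq_mul_coeff w fun _ _ => mul_right_inj _).trans
      (one_mul _)
  · refine MonoidAlgebra.coeff_single_mul_of_forall_mul_ne _ _ fun d hd => h ?_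
    exact (List.cons.inj (congrArg FreeMonoid.toList hd)).1

lemma eq_zero_of_sum_gen_mul_eq_zero {s : Finset ℕ} {z : ℕ → Gam}
    (h : ∑ i ∈ s, gen i * z i = 0) {i : ℕ} (hi : i ∈ s) : z i = 0 := by
  ext w
  have := congrArg (fun y : Gam => y.coeff (FreeMonoid.of i * w)) h
  simpa [MonoidAlgebra.coeff_sum, Finset.sum_apply', coeff_gen_mul_of_mul, hi] using this

lemma sum_range_add_choose_smul_gen_mul (p K : ℕ) (y : ℕ → Gam) :
    ∑ i ∈ range (p + K), ((i - p).choose p : ZMod 2) • (gen (i - p) * y i) =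
      ∑ i ∈ range K, (i.choose p : ZMod 2) • (gen i * y (p + i)) := by
  rw [sum_range_add, Finset.sum_eq_zero, zero_add]
  · simp only [Nat.add_sub_cancel_left]
  · intro i hi
    rw [Nat.sub_eq_zero_of_le (mem_range.1 hi).le,
      Nat.choose_eq_zero_of_lt (Nat.pos_of_ne_zero (by simp at hi; omega)), Nat.cast_zero,
      zero_smul]

lemma SqG_sum_gen_mul (n K : ℕ) (y : ℕ → Gam) (hy : ∀ i, K ≤ i → y i = 0) :
    SqG n (∑ i ∈ range K, gen i * y i) = ∑ i ∈ range K,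
      gen i * ∑ p ∈ range (n + 1), (i.choose p : ZMod 2) • SqG (n - p) (y (p + i)) := by
  have extend (p : ℕ) :
      ∑ i ∈ range K, ((i - p).choose p : ZMod 2) • (gen (i - p) * SqG (n - p) (y i)) =
        ∑ i ∈ range (p + K), ((i - p).choose p : ZMod 2) • (gen (i - p) * SqG (n - p) (y i)) := by
    rw [add_comm, sum_range_add, left_eq_add]
    exact sum_eq_zero fun i _ => by rw [hy (K + i) (by omega), SqG_map_zero, mul_zero, smul_zero]
  simp only [SqG_map_sum, SqG_gen_mul]
  rw [sum_comm]
  simp only [extend, sum_range_add_choose_smul_gen_mul, mul_sum, mul_smul_comm]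
  exact sum_comm

section Components

variable {n K : ℕ} {y : ℕ → Gam}

lemma sum_choose_smul_SqG_eq_zero (hy : ∀ i, K ≤ i → y i = 0)
    (h : SqG n (∑ i ∈ range K, gen i * y i) = 0) (i : ℕ) :
    ∑ p ∈ range (n + 1), (i.choose p : ZMod 2) • SqG (n - p) (y (p + i)) = 0 := by
  rcases Nat.lt_or_ge i K with hi | hi
  · rw [SqG_sum_gen_mul n K y hy] at h
    exact eq_zero_of_sum_gen_mul_eq_zero h (mem_range.2 hi)
  · exact sum_eq_zero fun p _ => by rw [hy (p + i) (by omega), SqG_map_zero, smul_zero]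

lemma SqG_one_eq_of_SqG_one_eq_zero (hy : ∀ i, K ≤ i → y i = 0)
    (h : SqG 1 (∑ i ∈ range K, gen i * y i) = 0) (i : ℕ) :
    SqG 1 (y i) = (i : ZMod 2) • y (i + 1) := by
  rw [← sub_eq_zero, CharTwo.sub_eq_add]
  simpa [sum_range_succ, SqG_zero_apply, add_comm 1 i] using sum_choose_smul_SqG_eq_zero hy h i

lemma SqG_two_eq_of_SqG_two_eq_zero (hy : ∀ i, K ≤ i → y i = 0)
    (h : SqG 2 (∑ i ∈ range K, gen i * y i) = 0) (i : ℕ) :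
    SqG 2 (y i) = (i : ZMod 2) • SqG 1 (y (i + 1)) + (i.choose 2 : ZMod 2) • y (i + 2) := by
  rw [← sub_eq_zero, CharTwo.sub_eq_add, ← add_assoc]
  simpa [sum_range_succ, SqG_zero_apply, add_comm 1 i, add_comm 2 i] using
    sum_choose_smul_SqG_eq_zero hy h i

end Components

lemma sum_range_two_mul {M : Type*} [AddCommMonoid M] (f : ℕ → M) (n : ℕ) :
    ∑ i ∈ range (2 * n), f i = ∑ j ∈ range n, (f (2 * j) + f (2 * j + 1)) := by
  induction n with
  | zero => simp
  | succ n ih => rw [Nat.mul_succ, sum_range_succ, sum_range_succ, sum_range_succ, ih, add_assoc]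

lemma SqG_three_gen_mul_odd {y : ℕ → Gam} (h1 : ∀ i, SqG 1 (y i) = (i : ZMod 2) • y (i + 1))
    (h2 : ∀ i, SqG 2 (y i) = (i : ZMod 2) • SqG 1 (y (i + 1)) + (i.choose 2 : ZMod 2) • y (i + 2))
    (j : ℕ) :
    SqG 3 (gen (2 * j + 4) * y (2 * j + 1)) =
      ((j + 1 : ZMod 2) • (gen (2 * j + 3) * y (2 * j + 3) + gen (2 * j + 4) * y (2 * j + 4)) -
        (j : ZMod 2) • (gen (2 * j + 1) * y (2 * j + 1) + gen (2 * j + 2) * y (2 * j + 2))) +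
      (gen (2 * j + 2) * y (2 * j + 2) + gen (2 * j + 3) * y (2 * j + 3)) := by
  have hc : ∀ r, ((2 * j + r : ℕ) : ZMod 2) = r := fun r => by
    rw [CharTwo.natCast_eq_mod, CharTwo.natCast_eq_mod r, Nat.mul_add_mod]
  have sq1_odd : SqG 1 (y (2 * j + 1)) = y (2 * j + 2) := by rw [h1, hc]; simp
  have sq1_even : SqG 1 (y (2 * j + 2)) = 0 := by rw [h1, hc]; simp [CharTwo.two_eq_zero]
  have sq2_odd : SqG 2 (y (2 * j + 1)) = (j : ZMod 2) • y (2 * j + 3) := by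
    rw [h2, sq1_even, choose_cast_zmod_two]; simp [Nat.mul_add_div]
  have sq2_even : SqG 2 (y (2 * j + 2)) = (j + 1 : ZMod 2) • y (2 * j + 4) := by
    rw [h2, hc, choose_cast_zmod_two]; simp [CharTwo.two_eq_zero]
  rw [SqG_three_gen_mul, ← SqG_two_SqG_one, sq1_odd, sq2_even, sq2_odd,
    show 2 * j + 4 - 1 = 2 * j + 3 by omega, show 2 * j + 4 - 2 = 2 * j + 2 by omega,
    show 2 * j + 4 - 3 = 2 * j + 1 by omega, hc, choose_cast_zmod_two, choose_cast_zmod_two]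
  norm_num [Nat.mul_add_mod, show (2 * j + 1) / 2 = j by omega,
    show (2 * j + 2) / 2 = j + 1 by omega, mul_smul_comm]
  generalize (j : ZMod 2) = c
  match_scalars <;> revert c <;> decide

lemma SqG_three_sum_gen_mul_odd {y : ℕ → Gam}
    (h1 : ∀ i, SqG 1 (y i) = (i : ZMod 2) • y (i + 1))
    (h2 : ∀ i, SqG 2 (y i) = (i : ZMod 2) • SqG 1 (y (i + 1)) + (i.choose 2 : ZMod 2) • y (i + 2))
    {N : ℕ} (hy : ∀ i, 2 * N + 1 ≤ i → y i = 0) :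
    SqG 3 (∑ j ∈ range N, gen (2 * j + 4) * y (2 * j + 1)) =
      ∑ i ∈ range (2 * N), gen (i + 2) * y (i + 2) := by
  let t : ℕ → Gam := fun j =>
    (j : ZMod 2) • (gen (2 * j + 1) * y (2 * j + 1) + gen (2 * j + 2) * y (2 * j + 2))
  have ht0 : t 0 = 0 := by simp [t]
  have htN : t N = 0 := by simp [t, hy (2 * N + 1) le_rfl, hy (2 * N + 2) (by omega)]
  calc SqG 3 (∑ j ∈ range N, gen (2 * j + 4) * y (2 * j + 1))
      = ∑ j ∈ range N, ((t (j + 1) - t j) +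
          (gen (2 * j + 2) * y (2 * j + 2) + gen (2 * j + 3) * y (2 * j + 3))) := by
        rw [SqG_map_sum]
        refine sum_congr rfl fun j _ => ?_
        rw [SqG_three_gen_mul_odd h1 h2 j]
        simp only [t]
        push_cast
        ring_nf
    _ = ∑ i ∈ range (2 * N), gen (i + 2) * y (i + 2) := by
        rw [sum_add_distrib, sum_range_sub, ht0, htN, sub_zero, zero_add, sum_range_two_mul]

lemma finsum_eq_sum_range_of_forall_ge {M : Type*} [AddCommMonoid M] {f : ℕ → M} {K : ℕ}
    (hf : ∀ i, K ≤ i → f i = 0) : ∑ᶠ i, f i = ∑ i ∈ range K, f i :=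
  finsum_eq_sum_of_support_subset f fun i hi =>
    mem_range.2 (not_le.1 fun h => hi (hf i h))

theorem stmt_15_general (x : Gam) (x_ : ℕ → Gam)
    (hfin : (Function.support x_).Finite) (h0 : x_ 0 = 0)
    (hx : x = ∑ᶠ i : ℕ, gen i * x_ i)
    (hker1 : SqG 1 x = 0) (hker2 : SqG 2 x = 0) :
    SqG 3 (∑ᶠ j : ℕ, gen (2 * (j + 2)) * x_ (2 * (j + 2) - 3)) =
        ∑ᶠ i : ℕ, gen (i + 2) * x_ (i + 2) ∧
      x + gen 1 * x_ 1 ∈ Set.range (SqG 3) := by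
  obtain ⟨N, hN⟩ : ∃ N, ∀ i, N ≤ i → x_ i = 0 := by
    obtain ⟨M, hM⟩ := hfin.bddAbove
    exact ⟨M + 1, fun i hi => Function.notMem_support.1 fun h => by have := hM h; omega⟩
  have hxK : ∀ K, N ≤ K → x = ∑ i ∈ range K, gen i * x_ i := fun K hK =>
    hx.trans (finsum_eq_sum_range_of_forall_ge fun i hi => by rw [hN i (by omega), mul_zero])
  have h1 := SqG_one_eq_of_SqG_one_eq_zero hN (hxK N le_rfl ▸ hker1)
  have h2 := SqG_two_eq_of_SqG_two_eq_zero hN (hxK N le_rfl ▸ hker2)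
  have hsrc : ∑ᶠ j, gen (2 * (j + 2)) * x_ (2 * (j + 2) - 3) =
      ∑ j ∈ range N, gen (2 * j + 4) * x_ (2 * j + 1) := by
    rw [finsum_eq_sum_range_of_forall_ge (K := N) fun j hj => by rw [hN _ (by omega), mul_zero]]
    exact sum_congr rfl fun j _ => by rw [show 2 * (j + 2) - 3 = 2 * j + 1 by omega, mul_add]
  have htgt : ∑ᶠ i, gen (i + 2) * x_ (i + 2) = ∑ i ∈ range (2 * N), gen (i + 2) * x_ (i + 2) :=
    finsum_eq_sum_range_of_forall_ge fun i hi => by rw [hN (i + 2) (by omega), mul_zero]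
  have hmain : SqG 3 (∑ᶠ j, gen (2 * (j + 2)) * x_ (2 * (j + 2) - 3)) =
      ∑ᶠ i, gen (i + 2) * x_ (i + 2) := by
    rw [hsrc, htgt]
    exact SqG_three_sum_gen_mul_odd h1 h2 fun i hi => hN i (by omega)
  refine ⟨hmain, _, hmain.trans ?_⟩
  rw [htgt, hxK (2 * N + 2) (by omega), sum_range_succ', sum_range_succ', h0, mul_zero, add_zero,
    add_assoc, CharTwo.add_self_eq_zero, add_zero]

/-- If `x = Σ_{i≥1}[i]·x_i ∈ Γ_s` (`s ≥ 2`) lies in `ker Sq¹ ∩ ker Sq²`, then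
the element `x' = Σ_{j≥2}[2j]·x_{2j−3}` satisfies `x'Sq³ = Σ_{i≥2}[i]·x_i`;
i.e. `x − [1]·x₁` lies in the image of `Sq³`. -/
theorem stmt_15 (s : ℕ) (hs : 2 ≤ s) (x : Gam) (x_ : ℕ → Gam)
    (hxlen : homLen s x) (hcomplen : ∀ i, homLen (s - 1) (x_ i))
    (hfin : (Function.support x_).Finite) (h0 : x_ 0 = 0)
    (hx : x = ∑ᶠ i : ℕ, gen i * x_ i)
    (hker1 : SqG 1 x = 0) (hker2 : SqG 2 x = 0) :
    SqG 3 (∑ᶠ j : ℕ, gen (2 * (j + 2)) * x_ (2 * (j + 2) - 3)) =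
        ∑ᶠ i : ℕ, gen (i + 2) * x_ (i + 2) ∧
      x + gen 1 * x_ 1 ∈ Set.range (SqG 3) :=
  stmt_15_general x x_ hfin h0 hx hker1 hker2
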